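/- Fix a positive integer K, reals ρ > 0, γ > 0, σ² ≥ 0, and a natural number n′. Let g₀, g₁, …, g_{n′} be mutually independent unit-rate exponential random variables, let U₁, …, U_{n′} be mutually independent random variables uniformly distributed on (−2/K, 2/K), independent of all the gᵢ, and set I = ∑_{i=1}^{n′} ρ·gᵢ·f_K(Uᵢ). Then P(ρ·K·g₀ ≥ γ·(σ² + I)) = exp(−γσ²/(ρK)) · q(γ)^{n′}, where q(γ) = arctanh(√(γ/(1+γ)))/√(γ(1+γ)). (This is the exact form of the success probability of Lemma 1 conditioned on n′ interferers lying in the main lobe, under the quadratic kernel model.) -/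

import Mathlib

/-!
Since `g₀` is a unit exponential independent of the normalised interference
`T = γσ²/(ρK) + ∑ᵢ (γ/K) gᵢ f_K(Uᵢ) ≥ 0`, the success probability `P(T ≤ g₀)` is the Laplace
transform `E[e^{-T}]`. The pairs `(gᵢ, Uᵢ)` are independent, so this factors as
`e^{-γσ²/(ρK)}` times `n′` equal factors. Integrating out the exponential `gᵢ` leaves
`E[(1 + (γ/K) f_K(U))⁻¹]`, which the substitution `v = KU/2` turns into
`½ ∫₋₁¹ dv / (1 + γ - γv²) = q(γ)`, an `arctanh` integral.
-/

open MeasureTheory ProbabilityTheory Finset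

/-- The real inverse hyperbolic tangent, `arctanh x = (1/2) log((1+x)/(1-x))`. -/
noncomputable def arctanh (x : ℝ) : ℝ := (1 / 2) * Real.log ((1 + x) / (1 - x))

/-- The per-interferer attenuation factor
`q(γ) = arctanh(√(γ/(1+γ))) / √(γ(1+γ))`. -/
noncomputable def q (γ : ℝ) : ℝ :=
  arctanh (Real.sqrt (γ / (1 + γ))) / Real.sqrt (γ * (1 + γ))

/-- The quadratic main-lobe kernel `f_K(x) = K - K³x²/4` for `|x| ≤ 2/K` and
`0` otherwise. -/
noncomputable def fK (K : ℕ) (x : ℝ) : ℝ :=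
  if |x| ≤ 2 / (K : ℝ) then (K : ℝ) - (K : ℝ) ^ 3 * x ^ 2 / 4 else 0

open Real

namespace ProbabilityTheory

variable {Ω ι κ β : Type*} {mΩ : MeasurableSpace Ω} {P : Measure Ω}

section Independence

variable [MeasurableSpace β]

lemma iIndepFun.indepFun_sumElim [Fintype ι] [Fintype κ] {X : ι ⊕ κ → Ω → β}
    (hX : iIndepFun X P) (hm : ∀ j, Measurable (X j)) :
    IndepFun (fun ω i ↦ X (.inl i) ω) (fun ω k ↦ X (.inr k) ω) P := by
  have := hX.isProbabilityMeasure
  rw [indepFun_iff_map_prod_eq_prod_map_map (by fun_prop) (by fun_prop),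
    (hX.precomp Sum.inl_injective).map_fun_eq_pi_map (fun i ↦ (hm _).aemeasurable),
    (hX.precomp Sum.inr_injective).map_fun_eq_pi_map (fun i ↦ (hm _).aemeasurable)]
  have hsplit : (fun ω ↦ ((fun i ↦ X (.inl i) ω), fun k ↦ X (.inr k) ω)) =
      MeasurableEquiv.sumPiEquivProdPi (fun _ ↦ β) ∘ fun ω j ↦ X j ω := rfl
  rw [hsplit, ← Measure.map_map (MeasurableEquiv.measurable _) (by fun_prop),
    hX.map_fun_eq_pi_map (fun j ↦ (hm j).aemeasurable),
    (measurePreserving_sumPiEquivProdPi _).map_eq]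

lemma iIndepFun.prodMk_of_sumElim [Fintype ι] {f g : ι → Ω → β}
    (h : iIndepFun (Sum.elim f g) P) (hf : ∀ i, Measurable (f i)) (hg : ∀ i, Measurable (g i)) :
    iIndepFun (fun i ω ↦ (f i ω, g i ω)) P := by
  have := h.isProbabilityMeasure
  have hm : ∀ j, Measurable (Sum.elim f g j) := Sum.forall.2 ⟨hf, hg⟩
  rw [iIndepFun_iff_map_fun_eq_pi_map (fun i ↦ by fun_prop)]
  have hpair : ∀ i, P.map (fun ω ↦ (f i ω, g i ω)) = (P.map (f i)).prod (P.map (g i)) := fun i ↦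
    (h.indepFun (i := .inl i) (j := .inr i) Sum.inl_ne_inr).map_prod_eq_prod_map_map
      (hf i).aemeasurable (hg i).aemeasurable
  have hzip : (fun ω i ↦ (f i ω, g i ω)) = (MeasurableEquiv.arrowProdEquivProdArrow β β ι).symm ∘
      fun ω ↦ ((fun i ↦ f i ω), fun i ↦ g i ω) := rfl
  have hfg : IndepFun (fun ω i ↦ f i ω) (fun ω i ↦ g i ω) P := h.indepFun_sumElim hm
  rw [hzip, ← Measure.map_map (MeasurableEquiv.measurable _) (by fun_prop),
    hfg.map_prod_eq_prod_map_map (by fun_prop) (by fun_prop),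
    (h.precomp Sum.inl_injective).map_fun_eq_pi_map (fun i ↦ (hf i).aemeasurable),
    (h.precomp Sum.inr_injective).map_fun_eq_pi_map (fun i ↦ (hg i).aemeasurable),
    ← (measurePreserving_arrowProdEquivProdArrow β β ι _ _).map_eq,
    Measure.map_map (MeasurableEquiv.measurable _) (MeasurableEquiv.measurable _)]
  simp [hpair]

end Independence

instance : IsProbabilityMeasure (expMeasure 1) := isProbabilityMeasure_expMeasure one_pos

lemma expMeasure_singleton (r t : ℝ) : expMeasure r {t} = 0 :=
  withDensity_absolutelyContinuous _ _ (Real.volume_singleton)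

lemma expMeasure_one_Iic {t : ℝ} (ht : 0 ≤ t) :
    expMeasure 1 (Set.Iic t) = ENNReal.ofReal (1 - exp (-t)) := by
  rw [← ofReal_cdf, cdf_expMeasure_eq one_pos, if_pos ht, one_mul]

lemma expMeasure_one_Ici {t : ℝ} (ht : 0 ≤ t) :
    expMeasure 1 (Set.Ici t) = ENNReal.ofReal (exp (-t)) := by
  rw [← Set.compl_Iio, prob_compl_eq_one_sub measurableSet_Iio,
    measure_congr (Iio_ae_eq_Iic' (expMeasure_singleton 1 t)), expMeasure_one_Iic ht,
    ← ENNReal.ofReal_one, ← ENNReal.ofReal_sub _ (sub_nonneg.2 (exp_le_one_iff.2 (by linarith))),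
    sub_sub_cancel]

lemma ae_nonneg_expMeasure (r : ℝ) : ∀ᵐ x ∂expMeasure r, 0 ≤ x := by
  refine (ae_withDensity_iff (by unfold gammaPDF; fun_prop)).2 (ae_of_all _ fun x hx ↦ ?_)
  exact not_lt.1 fun h ↦ hx (gammaPDF_of_neg h)

lemma hasLaw_expMeasure_one {Y : Ω → ℝ} [IsProbabilityMeasure P] (hY : Measurable Y)
    (hsurv : ∀ t, 0 ≤ t → P {ω | Y ω > t} = ENNReal.ofReal (exp (-t))) :
    HasLaw Y (expMeasure 1) P := by
  have hle : ∀ t, Y ⁻¹' Set.Iic t = {ω | Y ω > t}ᶜ := fun t ↦ by ext; simp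
  have hgt : ∀ t, MeasurableSet {ω | Y ω > t} := fun t ↦ hY measurableSet_Ioi
  refine ⟨hY.aemeasurable, Measure.ext_of_Iic _ _ fun t ↦ ?_⟩
  rw [Measure.map_apply hY measurableSet_Iic, ← ofReal_cdf, cdf_expMeasure_eq one_pos, one_mul,
    hle, prob_compl_eq_one_sub (hgt t)]
  split_ifs with ht
  · rw [hsurv t ht, ← ENNReal.ofReal_one, ENNReal.ofReal_sub _ (exp_nonneg _)]
  · rw [ENNReal.ofReal_zero]
    refine le_antisymm ?_ zero_le
    calc 1 - P {ω | Y ω > t} ≤ 1 - P {ω | Y ω > 0} :=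
          tsub_le_tsub_left (measure_mono fun ω (h : 0 < Y ω) ↦ (not_le.1 ht).trans h) 1
      _ = 0 := by simp [hsurv 0 le_rfl]

lemma lintegral_exp_neg_mul_expMeasure_one {b : ℝ} (hb : 0 ≤ b) :
    ∫⁻ x, ENNReal.ofReal (exp (-(b * x))) ∂expMeasure 1 = ENNReal.ofReal (1 + b)⁻¹ := by
  have hdens : ∀ x, exponentialPDF 1 x * ENNReal.ofReal (exp (-(b * x))) =
      (Set.Ici 0).indicator (fun x ↦ ENNReal.ofReal (exp (-(1 + b) * x))) x := fun x ↦ by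
    rcases lt_or_ge x 0 with hx | hx
    · simp [exponentialPDF_of_neg hx, hx]
    · rw [exponentialPDF_of_nonneg hx, Set.indicator_of_mem (Set.mem_Ici.2 hx),
        ← ENNReal.ofReal_mul (by positivity), one_mul, one_mul, ← exp_add]
      ring_nf
  have hint : IntegrableOn (fun x ↦ exp (-(1 + b) * x)) (Set.Ioi 0) :=
    integrableOn_exp_mul_Ioi (by linarith) 0
  calc ∫⁻ x, ENNReal.ofReal (exp (-(b * x))) ∂expMeasure 1
      = ∫⁻ x, exponentialPDF 1 x * ENNReal.ofReal (exp (-(b * x))) :=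
        lintegral_withDensity_eq_lintegral_mul _ (measurable_exponentialPDFReal 1).ennreal_ofReal
          (by fun_prop)
    _ = ∫⁻ x in Set.Ioi 0, ENNReal.ofReal (exp (-(1 + b) * x)) := by
        rw [lintegral_congr hdens, lintegral_indicator measurableSet_Ici,
          setLIntegral_congr Ioi_ae_eq_Ici.symm]
    _ = ENNReal.ofReal (1 + b)⁻¹ := by
        rw [← ofReal_integral_eq_lintegral_ofReal hint (ae_of_all _ fun x ↦ (exp_pos _).le),
          integral_exp_mul_Ioi (by linarith), mul_zero, exp_zero, neg_div_neg_eq, one_div]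

lemma IndepFun.measure_le_eq_lintegral_exp {Y T : Ω → ℝ} (hYT : IndepFun Y T P)
    (hY : HasLaw Y (expMeasure 1) P) (hT : Measurable T) (hT0 : ∀ᵐ ω ∂P, 0 ≤ T ω) :
    P {ω | T ω ≤ Y ω} = ∫⁻ ω, ENNReal.ofReal (exp (-T ω)) ∂P := by
  have := hY.isProbabilityMeasure
  have hS : MeasurableSet {p : ℝ × ℝ | p.2 ≤ p.1} := measurableSet_le measurable_snd measurable_fst
  calc P {ω | T ω ≤ Y ω} = P.map (fun ω ↦ (Y ω, T ω)) {p | p.2 ≤ p.1} :=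
        (Measure.map_apply_of_aemeasurable (hY.aemeasurable.prodMk hT.aemeasurable) hS).symm
    _ = ∫⁻ t, expMeasure 1 (Set.Ici t) ∂P.map T := by
        rw [hYT.map_prod_eq_prod_map_map hY.aemeasurable hT.aemeasurable,
          hY.map_eq, Measure.prod_apply_symm hS]
        rfl
    _ = ∫⁻ t, ENNReal.ofReal (exp (-t)) ∂P.map T := by
        refine lintegral_congr_ae ?_
        filter_upwards [(ae_map_iff hT.aemeasurable measurableSet_Ici).2 hT0] with t ht
        exact expMeasure_one_Ici ht
    _ = ∫⁻ ω, ENNReal.ofReal (exp (-T ω)) ∂P := lintegral_map (by fun_prop) hT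

lemma iIndepFun.lintegral_exp_neg_add_sum {𝓧 : Type*} [MeasurableSpace 𝓧] [Fintype ι]
    {Z : ι → Ω → 𝓧} {μ : Measure 𝓧} {F : 𝓧 → ℝ} (hZ : iIndepFun Z P)
    (hZm : ∀ i, Measurable (Z i)) (hlaw : ∀ i, HasLaw (Z i) μ P) (hF : Measurable F) (c : ℝ) :
    ∫⁻ ω, ENNReal.ofReal (exp (-(c + ∑ i, F (Z i ω)))) ∂P =
      ENNReal.ofReal (exp (-c)) * (∫⁻ x, ENNReal.ofReal (exp (-F x)) ∂μ) ^ Fintype.card ι := by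
  calc ∫⁻ ω, ENNReal.ofReal (exp (-(c + ∑ i, F (Z i ω)))) ∂P
      = ∫⁻ ω, ENNReal.ofReal (exp (-c)) * ∏ i, ENNReal.ofReal (exp (-F (Z i ω))) ∂P := by
        refine lintegral_congr fun ω ↦ ?_
        rw [neg_add, exp_add, ← Finset.sum_neg_distrib, exp_sum, ENNReal.ofReal_mul (exp_nonneg _),
          ENNReal.ofReal_prod_of_nonneg fun i _ ↦ exp_nonneg _]
    _ = ENNReal.ofReal (exp (-c)) * ∏ i, ∫⁻ ω, ENNReal.ofReal (exp (-F (Z i ω))) ∂P := by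
        rw [lintegral_const_mul _ (by fun_prop)]
        exact congrArg _ (lintegral_prod_eq_prod_lintegral_of_indepFun _ _
          (hZ.comp (fun _ x ↦ ENNReal.ofReal (exp (-F x))) fun _ ↦ by fun_prop) fun _ ↦ by fun_prop)
    _ = _ := by
        simp_rw [fun i ↦ (hlaw i).lintegral_comp (f := fun x ↦ ENNReal.ofReal (exp (-F x)))
          (by fun_prop), Finset.prod_const, Finset.card_univ]

end ProbabilityTheory

lemma le_mul_iff_div_add_sum_le {ι : Type*} (s : Finset ι) {ρ K γ σ2 y : ℝ} (hρ : 0 < ρ)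
    (hK : 0 < K) (a b : ι → ℝ) :
    γ * (σ2 + ∑ i ∈ s, ρ * a i * b i) ≤ ρ * K * y ↔
      γ * σ2 / (ρ * K) + ∑ i ∈ s, γ / K * a i * b i ≤ y := by
  have hscale : γ * (σ2 + ∑ i ∈ s, ρ * a i * b i) =
      ρ * K * (γ * σ2 / (ρ * K) + ∑ i ∈ s, γ / K * a i * b i) := by
    rw [mul_add, mul_add, Finset.mul_sum, Finset.mul_sum]
    congr 1
    · field_simp
    · exact Finset.sum_congr rfl fun i _ ↦ by field_simp
  rw [hscale, mul_le_mul_iff_right₀ (mul_pos hρ hK)]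

lemma arctanh_neg (x : ℝ) : arctanh (-x) = -arctanh x := by
  rw [arctanh, arctanh, ← sub_eq_add_neg, sub_neg_eq_add, ← inv_div (1 + x), log_inv]
  ring

lemma hasDerivAt_arctanh {x : ℝ} (hx : |x| < 1) : HasDerivAt arctanh (1 - x ^ 2)⁻¹ x := by
  obtain ⟨h₁, h₂⟩ := abs_lt.1 hx
  have hsub : 1 - x ≠ 0 := by linarith
  have hadd : 1 + x ≠ 0 := by linarith
  have hsq : 1 - x ^ 2 ≠ 0 := by nlinarith
  have hquot : HasDerivAt (fun y ↦ (1 + y) / (1 - y)) (2 / (1 - x) ^ 2) x :=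
    (((hasDerivAt_id' x).const_add 1).div ((hasDerivAt_id' x).const_sub 1) hsub).congr_deriv
      (by ring)
  exact ((hquot.log (div_ne_zero hadd hsub)).const_mul (1 / 2)).congr_deriv
    (by field_simp; ring)

lemma arctanh_nonneg {x : ℝ} (hx₀ : 0 ≤ x) (hx₁ : x < 1) : 0 ≤ arctanh x :=
  mul_nonneg (by norm_num) (log_nonneg ((le_div_iff₀ (by linarith)).2 (by linarith)))

lemma sqrt_div_one_add_lt_one {γ : ℝ} (hγ : 0 ≤ γ) : √(γ / (1 + γ)) < 1 :=
  (sqrt_lt' one_pos).2 (by rw [one_pow, div_lt_one (by linarith)]; linarith)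

lemma q_nonneg {γ : ℝ} (hγ : 0 ≤ γ) : 0 ≤ q γ :=
  div_nonneg (arctanh_nonneg (sqrt_nonneg _) (sqrt_div_one_add_lt_one hγ)) (sqrt_nonneg _)

lemma one_le_one_add_sub_mul_sq {γ v : ℝ} (hγ : 0 ≤ γ) (hv : |v| ≤ 1) : 1 ≤ 1 + γ - γ * v ^ 2 := by
  have : v ^ 2 ≤ 1 := by rw [← sq_abs]; exact pow_le_one₀ (abs_nonneg v) hv
  nlinarith

lemma integral_inv_one_add_sub_mul_sq {γ : ℝ} (hγ : 0 < γ) :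
    ∫ v in (-1)..1, (1 + γ - γ * v ^ 2)⁻¹ = 2 * q γ := by
  set c := √(γ / (1 + γ))
  have hc₀ : 0 < c := sqrt_pos.2 (by positivity)
  have hc_sq : c ^ 2 = γ / (1 + γ) := sq_sqrt (by positivity)
  have hsqrt : √(γ * (1 + γ)) = c * (1 + γ) :=
    (sqrt_eq_iff_eq_sq (by positivity) (by positivity)).2 (by rw [mul_pow, hc_sq]; field_simp)
  have hpos : ∀ v ∈ Set.uIcc (-1 : ℝ) 1, |v| ≤ 1 ∧ 0 < 1 + γ - γ * v ^ 2 := fun v hv ↦ by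
    rw [Set.uIcc_of_le (by norm_num)] at hv
    exact ⟨abs_le.2 hv, one_pos.trans_le (one_le_one_add_sub_mul_sq hγ.le (abs_le.2 hv))⟩
  have hderiv : ∀ v ∈ Set.uIcc (-1 : ℝ) 1,
      HasDerivAt (fun v ↦ arctanh (c * v) / √(γ * (1 + γ))) (1 + γ - γ * v ^ 2)⁻¹ v := by
    intro v hv
    have hcv : |c * v| < 1 := by
      rw [abs_mul, abs_of_pos hc₀]
      nlinarith [sqrt_div_one_add_lt_one hγ.le, (hpos v hv).1, abs_nonneg v]
    have hden := (hpos v hv).2.ne'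
    refine (((hasDerivAt_arctanh hcv).comp v ((hasDerivAt_id' v).const_mul c)).div_const
      (√(γ * (1 + γ)))).congr_deriv ?_
    rw [hsqrt, mul_pow, hc_sq]
    field_simp
  rw [intervalIntegral.integral_eq_sub_of_hasDerivAt hderiv (ContinuousOn.intervalIntegrable
      (ContinuousOn.inv₀ (by fun_prop) fun v hv ↦ (hpos v hv).2.ne')),
    mul_neg_one, arctanh_neg, mul_one, q]
  ring

lemma measurable_fK (K : ℕ) : Measurable (fK K) :=
  Measurable.ite (measurableSet_le measurable_abs measurable_const) (by fun_prop) measurable_const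

lemma fK_of_abs_le {K : ℕ} {x : ℝ} (hx : |x| ≤ 2 / K) : fK K x = K * (1 - (K / 2 * x) ^ 2) := by
  rw [fK, if_pos hx]
  ring

lemma abs_half_mul_le_one {K : ℝ} (hK : 0 < K) {x : ℝ} (hx : |x| ≤ 2 / K) : |K / 2 * x| ≤ 1 := by
  rwa [abs_mul, abs_of_pos (by positivity), ← le_div_iff₀' (by positivity), one_div_div]

lemma fK_nonneg (K : ℕ) (x : ℝ) : 0 ≤ fK K x := by
  rcases Nat.eq_zero_or_pos K with rfl | hK
  · simp [fK]
  by_cases hx : |x| ≤ 2 / K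
  · have hKx := abs_half_mul_le_one (Nat.cast_pos.2 hK) hx
    rw [fK_of_abs_le hx, ← sq_abs]
    exact mul_nonneg K.cast_nonneg (sub_nonneg.2 (pow_le_one₀ (abs_nonneg _) hKx))
  · rw [fK, if_neg hx]

lemma lintegral_uniform_inv_one_add_mul_fK {K : ℕ} (hK : 0 < K) {γ : ℝ} (hγ : 0 < γ) :
    ∫⁻ u, ENNReal.ofReal (1 + γ / K * fK K u)⁻¹ ∂(ENNReal.ofReal ((K : ℝ) / 4) •
      volume.restrict (Set.Ioo (-(2 / (K : ℝ))) (2 / (K : ℝ)))) = ENNReal.ofReal (q γ) := by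
  have hK' : (0 : ℝ) < K := Nat.cast_pos.2 hK
  set f : ℝ → ℝ := fun v ↦ (1 + γ - γ * v ^ 2)⁻¹
  have hf : ∀ u ∈ Set.Ioo (-(2 / (K : ℝ))) (2 / K),
      ENNReal.ofReal (1 + γ / K * fK K u)⁻¹ = ENNReal.ofReal (f (K / 2 * u)) := fun u hu ↦ by
    rw [fK_of_abs_le (abs_le.2 ⟨hu.1.le, hu.2.le⟩)]
    congr 2
    field_simp
    ring
  have hden : ∀ u ∈ Set.Icc (-(2 / (K : ℝ))) (2 / K), 1 ≤ 1 + γ - γ * (K / 2 * u) ^ 2 :=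
    fun u hu ↦ one_le_one_add_sub_mul_sq hγ.le (abs_half_mul_le_one hK' (abs_le.2 hu))
  have hcont : ContinuousOn (fun u ↦ f (K / 2 * u)) (Set.Icc (-(2 / (K : ℝ))) (2 / K)) :=
    ContinuousOn.inv₀ (by fun_prop) fun u hu ↦ (zero_lt_one.trans_le (hden u hu)).ne'
  rw [lintegral_smul_measure, setLIntegral_congr_fun measurableSet_Ioo hf,
    ← ofReal_integral_eq_lintegral_ofReal
      ((hcont.integrableOn_compact isCompact_Icc).mono_set Set.Ioo_subset_Icc_self)
      ((ae_restrict_mem measurableSet_Ioo).mono fun u hu ↦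
        inv_nonneg.2 (zero_le_one.trans (hden u (Set.Ioo_subset_Icc_self hu)))),
    ← integral_Ioc_eq_integral_Ioo, ← intervalIntegral.integral_of_le (by
      have := div_pos two_pos hK'; linarith),
    intervalIntegral.integral_comp_mul_left f (by positivity),
    smul_eq_mul, ← ENNReal.ofReal_mul (by positivity),
    show (K : ℝ) / 2 * -(2 / K) = -1 by field_simp, show (K : ℝ) / 2 * (2 / K) = 1 by field_simp,
    integral_inv_one_add_sub_mul_sq hγ]
  congr 1
  rw [smul_eq_mul]
  field_simp
  norm_num

lemma lintegral_exp_neg_mul_fK {K : ℕ} (hK : 0 < K) {γ : ℝ} (hγ : 0 < γ) :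
    ∫⁻ p : ℝ × ℝ, ENNReal.ofReal (exp (-(γ / K * p.1 * fK K p.2))) ∂(expMeasure 1).prod
      (ENNReal.ofReal ((K : ℝ) / 4) • volume.restrict (Set.Ioo (-(2 / (K : ℝ))) (2 / (K : ℝ))))
      = ENNReal.ofReal (q γ) := by
  rw [lintegral_prod_symm _ (by have := measurable_fK K; fun_prop)]
  have hinner : ∀ u, ∫⁻ x, ENNReal.ofReal (exp (-(γ / K * x * fK K u))) ∂expMeasure 1 =
      ENNReal.ofReal (1 + γ / K * fK K u)⁻¹ := fun u ↦ by
    simp_rw [mul_right_comm _ _ (fK K u)]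
    exact lintegral_exp_neg_mul_expMeasure_one (by have := fK_nonneg K u; positivity)
  simp_rw [hinner]
  exact lintegral_uniform_inv_one_add_mul_fK hK hγ

/-- Success probability of Lemma 1 conditioned on `n′` interferers lying in
the main lobe, under the quadratic kernel model:
`P(ρ K g₀ ≥ γ(σ² + I)) = exp(-γσ²/(ρK)) · q(γ)^{n′}` where
`I = ∑ᵢ ρ gᵢ f_K(Uᵢ)`, the `gᵢ` are unit-rate exponentials and the `Uᵢ` are
uniform on `(-2/K, 2/K)`, all mutually independent. -/
theorem success_prob_given_main_lobe_interferers
    {Ω : Type*} [MeasurableSpace Ω] (P : Measure Ω) [IsProbabilityMeasure P]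
    (K : ℕ) (hK : 0 < K) (ρ γ σ2 : ℝ) (hρ : 0 < ρ) (hγ : 0 < γ) (hσ2 : 0 ≤ σ2)
    (n' : ℕ) (g0 : Ω → ℝ) (g U : Fin n' → Ω → ℝ)
    (hg0 : Measurable g0) (hg : ∀ i, Measurable (g i))
    (hU : ∀ i, Measurable (U i))
    (hindep : iIndepFun
      (Sum.elim (fun _ : Unit => g0) (Sum.elim g U) :
        (Unit ⊕ (Fin n' ⊕ Fin n')) → Ω → ℝ) P)
    (hg0exp : ∀ t : ℝ, 0 ≤ t →
      P {ω | g0 ω > t} = ENNReal.ofReal (Real.exp (-t)))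
    (hgexp : ∀ i, ∀ t : ℝ, 0 ≤ t →
      P {ω | g i ω > t} = ENNReal.ofReal (Real.exp (-t)))
    (hUunif : ∀ i, Measure.map (U i) P
      = ENNReal.ofReal ((K : ℝ) / 4) •
        volume.restrict (Set.Ioo (-(2 / (K : ℝ))) (2 / (K : ℝ)))) :
    P {ω | ρ * K * g0 ω ≥ γ * (σ2 + ∑ i, ρ * g i ω * fK K (U i ω))}
      = ENNReal.ofReal
          (Real.exp (-(γ * σ2) / (ρ * K)) * (q γ) ^ n') := by
  set c := γ * σ2 / (ρ * K)
  set F : ℝ × ℝ → ℝ := fun p ↦ γ / K * p.1 * fK K p.2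
  set Z : Fin n' → Ω → ℝ × ℝ := fun i ω ↦ (g i ω, U i ω)
  have hF : Measurable F := by have := measurable_fK K; fun_prop
  have hevent : {ω | ρ * K * g0 ω ≥ γ * (σ2 + ∑ i, ρ * g i ω * fK K (U i ω))} =
      {ω | c + ∑ i, F (Z i ω) ≤ g0 ω} :=
    Set.ext fun ω ↦ le_mul_iff_div_add_sum_le _ hρ (Nat.cast_pos.2 hK) _ _
  have hm : ∀ j, Measurable (Sum.elim (fun _ : Unit ↦ g0) (Sum.elim g U) j) :=
    Sum.forall.2 ⟨fun _ ↦ hg0, Sum.forall.2 ⟨hg, hU⟩⟩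
  have hg0T : IndepFun g0 (fun ω ↦ c + ∑ i, F (Z i ω)) P :=
    (hindep.indepFun_sumElim hm).comp (φ := fun v : Unit → ℝ ↦ v ())
      (ψ := fun v : Fin n' ⊕ Fin n' → ℝ ↦ c + ∑ i, F (v (.inl i), v (.inr i)))
      (measurable_pi_apply _) (by fun_prop)
  have hZlaw : ∀ i, HasLaw (Z i) ((expMeasure 1).prod (ENNReal.ofReal ((K : ℝ) / 4) •
      volume.restrict (Set.Ioo (-(2 / (K : ℝ))) (2 / (K : ℝ))))) P := fun i ↦
    (hindep.indepFun (i := .inr (.inl i)) (j := .inr (.inr i)) (by simp)).hasLaw_prod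
      (hasLaw_expMeasure_one (hg i) (hgexp i)) ⟨(hU i).aemeasurable, hUunif i⟩
  have hT0 : ∀ᵐ ω ∂P, 0 ≤ c + ∑ i, F (Z i ω) := by
    have hg_nonneg : ∀ i, ∀ᵐ ω ∂P, 0 ≤ g i ω := fun i ↦
      ((hasLaw_expMeasure_one (hg i) (hgexp i)).ae_iff (by fun_prop)).2 (ae_nonneg_expMeasure 1)
    filter_upwards [ae_all_iff.2 hg_nonneg] with ω hω
    exact add_nonneg (by positivity) (Finset.sum_nonneg fun i _ ↦
      mul_nonneg (mul_nonneg (by positivity) (hω i)) (fK_nonneg K _))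
  rw [hevent, hg0T.measure_le_eq_lintegral_exp (hasLaw_expMeasure_one hg0 hg0exp) (by fun_prop) hT0,
    ((hindep.precomp Sum.inr_injective).prodMk_of_sumElim hg hU).lintegral_exp_neg_add_sum
      (fun i ↦ (hg i).prodMk (hU i)) hZlaw hF, lintegral_exp_neg_mul_fK hK hγ, Fintype.card_fin,
    ← ENNReal.ofReal_pow (q_nonneg hγ.le), ← ENNReal.ofReal_mul (exp_nonneg _), neg_div]
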